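/- arXiv:2304.12171 — 7 statements merged into one kernel-verified Lean document; each statement's English description precedes it below -/
import Mathlib

section
/- If f and g are convex, closed, proper, lower semicontinuous functions on R^n, then f ≤_Q g if and only if g* ≤_P f*, where f ≤_Q g means: for all x in dom(f), y in dom(g), and δ₁ with 0 ≤ δ₁ ≤ (x−y)⁺, there exists δ₂ with 0 ≤ δ₂ ≤ (x−y)⁻ such that f(x−δ₁+δ₂) + g(y+δ₁−δ₂) ≤ f(x) + g(y); and g* ≤_P f* means: for all p in dom(g*), p' in dom(f*), g*(p∧p') + f*(p∨p') ≤ g*(p) + f*(p'). -/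
noncomputable section

/-- Legendre–Fenchel conjugate of an extended-real-valued function on `Fin n → ℝ`. -/
def conjE {n : ℕ} (f : (Fin n → ℝ) → EReal) (p : Fin n → ℝ) : EReal :=
  ⨆ x : Fin n → ℝ, ((∑ i, p i * x i : ℝ) : EReal) - f x

/-- Componentwise positive part. -/
def posP {n : ℕ} (a : Fin n → ℝ) : Fin n → ℝ := fun i => max (a i) 0

/-- Componentwise negative part. -/
def negP {n : ℕ} (a : Fin n → ℝ) : Fin n → ℝ := fun i => max (-a i) 0

/-- Convexity for extended-real-valued functions. -/
def ConvexE {n : ℕ} (f : (Fin n → ℝ) → EReal) : Prop :=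
  ∀ x y : Fin n → ℝ, ∀ t : ℝ, 0 ≤ t → t ≤ 1 →
    f (t • x + (1 - t) • y) ≤ (t : EReal) * f x + ((1 - t : ℝ) : EReal) * f y

/-- Properness. -/
def ProperE {n : ℕ} (f : (Fin n → ℝ) → EReal) : Prop :=
  (∀ x, f x ≠ ⊥) ∧ (∃ x, f x ≠ ⊤)

/-- The Q-order on functions: `f ≤_Q g`. -/
def QleF {n : ℕ} (f g : (Fin n → ℝ) → EReal) : Prop :=
  ∀ x y : Fin n → ℝ, f x ≠ ⊤ → g y ≠ ⊤ →
    ∀ δ₁ : Fin n → ℝ, 0 ≤ δ₁ → δ₁ ≤ posP (x - y) →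
      ∃ δ₂ : Fin n → ℝ, 0 ≤ δ₂ ∧ δ₂ ≤ negP (x - y) ∧
        f (x - δ₁ + δ₂) + g (y + δ₁ - δ₂) ≤ f x + g y

/-- The P-order on functions: `φ ≤_P φ'`. -/
def PleF {n : ℕ} (φ φ' : (Fin n → ℝ) → EReal) : Prop :=
  ∀ p p' : Fin n → ℝ, φ p ≠ ⊤ → φ' p' ≠ ⊤ →
    φ (p ⊓ p') + φ' (p ⊔ p') ≤ φ p + φ' p'

/-!
`≤_Q ⇒ ≤_P`: test the conjugates against a pair `(y, x)` and transfer `δ₁ = (x - y)⁺` on the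
coordinates where `p' < p`; with the compensating `δ₂` supplied by `≤_Q`, the value of `f + g`
does not increase while, coordinatewise, the linear part `⟨p, ·⟩ + ⟨p', ·⟩` only grows.

`≤_P ⇒ ≤_Q`: if every transfer `δ₂ ∈ [0, (x - y)⁻]` strictly increased `f x + g y`, the compact
convex set of transferred pairs could be strictly separated (Hahn–Banach) from the epigraph of
`(z, w) ↦ f z + g w` by an affine minorant `⟨p', z⟩ + ⟨p, w⟩ + β`. Evaluated at the transfer
`δ₂ = (x - y)⁻` on `{p' < p}`, and combined with `≤_P` at `(p, p')`, this contradicts the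
Fenchel–Young lower bounds for `g*(p ⊓ p')` and `f*(p ⊔ p')`.
-/

open Set

section Epigraph

variable {E : Type*}

/-- `EReal` is not an `ℝ`-module, so convexity and closedness of `EReal`-valued functions are
expressed through the part of the epigraph at real heights. -/
def epigraphReal (Φ : E → EReal) : Set (E × ℝ) := {p | Φ p.1 ≤ p.2}

theorem LowerSemicontinuous.isClosed_epigraphReal [TopologicalSpace E] {Φ : E → EReal}
    (hΦ : LowerSemicontinuous Φ) : IsClosed (epigraphReal Φ) :=
  hΦ.isClosed_epigraph.preimage <| continuous_fst.prodMk <|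
    continuous_coe_real_ereal.comp continuous_snd

variable [TopologicalSpace E] [AddCommGroup E] [Module ℝ E] {Φ : E → EReal} {K : Set E} {c : ℝ}

theorem exists_separation_epigraphReal [IsTopologicalAddGroup E] [ContinuousSMul ℝ E]
    [LocallyConvexSpace ℝ E] (hΦc : Convex ℝ (epigraphReal Φ))
    (hΦ : LowerSemicontinuous Φ) (hKc : Convex ℝ K) (hK : IsCompact K)
    (hlt : ∀ w ∈ K, (c : EReal) < Φ w) :
    ∃ (φ : E →L[ℝ] ℝ) (s u v : ℝ), u < v ∧ (∀ w ∈ K, φ w + s * c < u) ∧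
      ∀ z (t : ℝ), Φ z ≤ t → v < φ z + s * t := by
  have hdisj : Disjoint (K ×ˢ {c}) (epigraphReal Φ) := by
    refine Set.disjoint_left.2 fun ⟨w, t⟩ ⟨hw, ht⟩ hle => ?_
    obtain rfl : t = c := ht
    exact (hlt w hw).not_ge hle
  obtain ⟨Λ, u, v, hΛK, huv, hΛepi⟩ := geometric_hahn_banach_compact_closed
    (hKc.prod (convex_singleton c)) (hK.prod isCompact_singleton) hΦc
    hΦ.isClosed_epigraphReal hdisj
  have hΛ : ∀ z t, Λ (z, t) = Λ (z, 0) + Λ (0, 1) * t := fun z t => by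
    rw [mul_comm, ← smul_eq_mul, ← map_smul, ← map_add, Prod.smul_mk, smul_zero, smul_eq_mul,
      mul_one, Prod.mk_add_mk, add_zero, zero_add]
  refine ⟨Λ.comp (ContinuousLinearMap.inl ℝ E ℝ), Λ (0, 1), u, v, huv, fun w hw => ?_,
    fun z t hzt => ?_⟩
  · have := hΛK (w, c) ⟨hw, rfl⟩
    rwa [hΛ] at this
  · have := hΛepi (z, t) hzt
    rwa [hΛ] at this

theorem exists_affine_of_separation {φ : E →L[ℝ] ℝ} {s u v : ℝ} (hs : 0 < s) (huv : u < v)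
    (hK : ∀ w ∈ K, φ w + s * c < u) (hepi : ∀ z (t : ℝ), Φ z ≤ t → v < φ z + s * t) :
    ∃ (ℓ : E →L[ℝ] ℝ) (b : ℝ), (∀ z, ((ℓ z + b : ℝ) : EReal) ≤ Φ z) ∧
      ∀ w ∈ K, c < ℓ w + b := by
  have hℓ : ∀ z, (-s⁻¹ • φ) z + v / s = (v - φ z) / s := fun z => by
    simp only [FunLike.coe_smul, Pi.smul_apply, smul_eq_mul]
    field_simp
    ring
  refine ⟨-s⁻¹ • φ, v / s, fun z => EReal.le_of_forall_lt_iff_le.1 fun t ht => ?_,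
    fun w hw => ?_⟩
  · have := hepi z t ht.le
    rw [EReal.coe_le_coe_iff, hℓ, div_le_iff₀ hs]
    linarith
  · have := hK w hw
    rw [hℓ, lt_div_iff₀ hs]
    linarith

variable [IsTopologicalAddGroup E] [ContinuousSMul ℝ E] [LocallyConvexSpace ℝ E]

theorem exists_affine_minorant (hΦc : Convex ℝ (epigraphReal Φ)) (hΦ : LowerSemicontinuous Φ)
    {z₀ : E} {r₀ : ℝ} (h₀ : Φ z₀ = r₀) :
    ∃ (ℓ : E →L[ℝ] ℝ) (b : ℝ), ∀ z, ((ℓ z + b : ℝ) : EReal) ≤ Φ z := by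
  have hlt : ∀ w ∈ ({z₀} : Set E), ((r₀ - 1 : ℝ) : EReal) < Φ w := by
    rintro w rfl
    rw [h₀, EReal.coe_lt_coe_iff]
    linarith
  obtain ⟨φ, s, u, v, huv, hφK, hepi⟩ := exists_separation_epigraphReal hΦc hΦ
    (convex_singleton z₀) isCompact_singleton hlt
  have hs : 0 < s := by
    have h₁ := hφK z₀ rfl
    have h₂ := hepi z₀ r₀ h₀.le
    linarith [mul_sub s r₀ 1]
  obtain ⟨ℓ, b, hℓ, -⟩ := exists_affine_of_separation hs huv hφK hepi
  exact ⟨ℓ, b, hℓ⟩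

theorem exists_affine_minorant_gt_on (hΦc : Convex ℝ (epigraphReal Φ))
    (hΦ : LowerSemicontinuous Φ) (hKc : Convex ℝ K) (hK : IsCompact K)
    (hlt : ∀ w ∈ K, (c : EReal) < Φ w) {z₀ : E} {r₀ : ℝ} (h₀ : Φ z₀ = r₀) :
    ∃ (ℓ : E →L[ℝ] ℝ) (b : ℝ), (∀ z, ((ℓ z + b : ℝ) : EReal) ≤ Φ z) ∧
      ∀ w ∈ K, c < ℓ w + b := by
  obtain ⟨φ, s, u, v, huv, hφK, hepi⟩ := exists_separation_epigraphReal hΦc hΦ hKc hK hlt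
  have hs : 0 ≤ s := by
    by_contra! hs
    have := hepi z₀ (r₀ + (φ z₀ + s * r₀ - v) / -s) (h₀.le.trans (by
      rw [EReal.coe_le_coe_iff, le_add_iff_nonneg_right]
      exact div_nonneg (by linarith [hepi z₀ r₀ h₀.le]) (by linarith)))
    rw [div_neg, mul_add, mul_neg, mul_div_cancel₀ _ hs.ne] at this
    linarith
  rcases hs.lt_or_eq with hs | rfl
  · exact exists_affine_of_separation hs huv hφK hepi
  -- a vertical separating hyperplane: tilt an affine minorant of `Φ` by a multiple of `φ`
  obtain ⟨ℓ₀, b₀, hℓ₀⟩ := exists_affine_minorant hΦc hΦ h₀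
  obtain ⟨m, hm⟩ := hK.bddBelow_image ℓ₀.continuous.continuousOn
  set k := max 0 ((c + 1 - m - b₀) / (v - u))
  have hk : c + 1 - m - b₀ ≤ k * (v - u) := (div_le_iff₀ (by linarith)).1 (le_max_right _ _)
  have hk₀ : 0 ≤ k := le_max_left _ _
  refine ⟨ℓ₀ - k • φ, b₀ + k * v, fun z => ?_, fun w hw => ?_⟩
  · rcases eq_or_ne (Φ z) ⊤ with htop | htop
    · simp [htop]
    have hv := hepi z _ (EReal.le_coe_toReal htop)
    refine le_trans ?_ (hℓ₀ z)
    rw [EReal.coe_le_coe_iff]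
    simp only [FunLike.coe_sub, FunLike.coe_smul, Pi.sub_apply, Pi.smul_apply, smul_eq_mul]
    nlinarith
  · have hu := hφK w hw
    have hmw : m ≤ ℓ₀ w := hm ⟨w, hw, rfl⟩
    simp only [FunLike.coe_sub, FunLike.coe_smul, Pi.sub_apply, Pi.smul_apply, smul_eq_mul]
    nlinarith

end Epigraph

section Conjugate

variable {n : ℕ}

theorem le_conjE (f : (Fin n → ℝ) → EReal) (p x : Fin n → ℝ) :
    ((p ⬝ᵥ x : ℝ) : EReal) - f x ≤ conjE f p :=
  le_iSup (fun x => ((p ⬝ᵥ x : ℝ) : EReal) - f x) x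

theorem coe_sub_le_conjE {f : (Fin n → ℝ) → EReal} {x : Fin n → ℝ} {r : ℝ} (h : f x ≤ r)
    (p : Fin n → ℝ) : ((p ⬝ᵥ x - r : ℝ) : EReal) ≤ conjE f p := by
  rw [EReal.coe_sub]
  exact (EReal.sub_le_sub le_rfl h).trans (le_conjE f p x)

theorem conjE_ne_bot {f : (Fin n → ℝ) → EReal} {x : Fin n → ℝ} {r : ℝ} (h : f x ≤ r)
    (p : Fin n → ℝ) : conjE f p ≠ ⊥ :=
  ne_bot_of_le_ne_bot (EReal.coe_ne_bot _) (coe_sub_le_conjE h p)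

theorem conjE_add_conjE_le {f g : (Fin n → ℝ) → EReal} {p q : Fin n → ℝ} {c : EReal}
    (h : ∀ x y, ((p ⬝ᵥ x : ℝ) : EReal) - f x + (((q ⬝ᵥ y : ℝ) : EReal) - g y) ≤ c) :
    conjE f p + conjE g q ≤ c :=
  EReal.add_le_of_forall_lt fun a ha b hb => by
    obtain ⟨x, hx⟩ := lt_iSup_iff.1 ha
    obtain ⟨y, hy⟩ := lt_iSup_iff.1 hb
    exact (add_le_add hx.le hy.le).trans (h x y)

theorem conjE_add_conjE_le_of_affine_le {f g : (Fin n → ℝ) → EReal} {p q : Fin n → ℝ} {b : ℝ}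
    (h : ∀ x y, ((p ⬝ᵥ x + q ⬝ᵥ y + b : ℝ) : EReal) ≤ f x + g y) :
    conjE f p + conjE g q ≤ ((-b : ℝ) : EReal) := by
  refine conjE_add_conjE_le fun x y => ?_
  have hxy := h x y
  rcases eq_or_ne (f x) ⊤ with hx | hx
  · simp [hx]
  rcases eq_or_ne (g y) ⊤ with hy | hy
  · simp [hy]
  have hx' : f x ≠ ⊥ := fun hb => by simp [hb] at hxy
  have hy' : g y ≠ ⊥ := fun hb => by simp [hb] at hxy
  lift f x to ℝ using ⟨hx, hx'⟩ with u
  lift g y to ℝ using ⟨hy, hy'⟩ with w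
  norm_cast at hxy ⊢
  linarith

end Conjugate

theorem EReal.exists_le_coe_le_coe_of_add_le {a b : EReal} {T : ℝ} (ha : a ≠ ⊥) (hb : b ≠ ⊥)
    (h : a + b ≤ T) : ∃ r s : ℝ, a ≤ r ∧ b ≤ s ∧ r + s ≤ T := by
  have hat : a ≠ ⊤ := by
    rintro rfl
    simp [EReal.top_add_of_ne_bot hb] at h
  have hbt : b ≠ ⊤ := by
    rintro rfl
    simp [EReal.add_top_of_ne_bot ha] at h
  lift a to ℝ using ⟨hat, ha⟩
  lift b to ℝ using ⟨hbt, hb⟩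
  exact ⟨a, b, le_rfl, le_rfl, by exact_mod_cast h⟩

theorem ContinuousLinearMap.exists_dotProduct_prod {n : ℕ}
    (ℓ : ((Fin n → ℝ) × (Fin n → ℝ)) →L[ℝ] ℝ) :
    ∃ p q : Fin n → ℝ, ∀ z w, ℓ (z, w) = p ⬝ᵥ z + q ⬝ᵥ w := by
  set e := dotProductEquiv ℝ (Fin n)
  refine ⟨e.symm (ℓ.comp (.inl ℝ _ _)).toLinearMap, e.symm (ℓ.comp (.inr ℝ _ _)).toLinearMap,
    fun z w => ?_⟩
  rw [show (z, w) = (z, 0) + (0, w) by simp, map_add]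
  have he : ∀ (θ : Module.Dual ℝ (Fin n → ℝ)) u, θ u = e.symm θ ⬝ᵥ u := fun θ u =>
    LinearMap.congr_fun (e.apply_symm_apply θ).symm u
  exact congr_arg₂ (· + ·) (he (ℓ.comp (.inl ℝ _ _)).toLinearMap z)
    (he (ℓ.comp (.inr ℝ _ _)).toLinearMap w)

theorem ConvexE.convex_epigraphReal {n : ℕ} {f : (Fin n → ℝ) → EReal} (hf : ConvexE f) :
    Convex ℝ (epigraphReal f) := by
  rintro ⟨x, r⟩ hx ⟨y, s⟩ hy a b ha hb hab
  obtain rfl : b = 1 - a := by linarith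
  calc f (a • x + (1 - a) • y) ≤ (a : EReal) * f x + ((1 - a : ℝ) : EReal) * f y :=
        hf x y a ha (by linarith)
    _ ≤ (a : EReal) * r + ((1 - a : ℝ) : EReal) * s :=
        add_le_add (mul_le_mul_of_nonneg_left hx (by exact_mod_cast ha))
          (mul_le_mul_of_nonneg_left hy (by exact_mod_cast hb))
    _ = ((a * r + (1 - a) * s : ℝ) : EReal) := by norm_cast

theorem convex_epigraphReal_add_prod {E F : Type*} [AddCommGroup E] [Module ℝ E]
    [AddCommGroup F] [Module ℝ F] {f : E → EReal} {g : F → EReal}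
    (hf : Convex ℝ (epigraphReal f)) (hg : Convex ℝ (epigraphReal g))
    (hf' : ∀ x, f x ≠ ⊥) (hg' : ∀ y, g y ≠ ⊥) :
    Convex ℝ (epigraphReal fun Z : E × F => f Z.1 + g Z.2) := by
  rintro ⟨⟨x₁, y₁⟩, T₁⟩ h₁ ⟨⟨x₂, y₂⟩, T₂⟩ h₂ a b ha hb hab
  obtain ⟨r₁, s₁, hr₁, hs₁, hT₁⟩ := EReal.exists_le_coe_le_coe_of_add_le (hf' _) (hg' _) h₁
  obtain ⟨r₂, s₂, hr₂, hs₂, hT₂⟩ := EReal.exists_le_coe_le_coe_of_add_le (hf' _) (hg' _) h₂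
  have hx : f (a • x₁ + b • x₂) ≤ ((a * r₁ + b * r₂ : ℝ) : EReal) :=
    hf (x := (x₁, r₁)) (y := (x₂, r₂)) hr₁ hr₂ ha hb hab
  have hy : g (a • y₁ + b • y₂) ≤ ((a * s₁ + b * s₂ : ℝ) : EReal) :=
    hg (x := (y₁, s₁)) (y := (y₂, s₂)) hs₁ hs₂ ha hb hab
  calc f (a • x₁ + b • x₂) + g (a • y₁ + b • y₂)
      ≤ ((a * r₁ + b * r₂ + (a * s₁ + b * s₂) : ℝ) : EReal) := by
        rw [EReal.coe_add]; exact add_le_add hx hy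
    _ ≤ ((a * T₁ + b * T₂ : ℝ) : EReal) := by
        rw [EReal.coe_le_coe_iff]; nlinarith

theorem LowerSemicontinuous.add_prod {α β : Type*} [TopologicalSpace α] [TopologicalSpace β]
    {f : α → EReal} {g : β → EReal} (hf : LowerSemicontinuous f) (hg : LowerSemicontinuous g)
    (hf' : ∀ x, f x ≠ ⊥) (hg' : ∀ y, g y ≠ ⊥) :
    LowerSemicontinuous fun Z : α × β => f Z.1 + g Z.2 :=
  (hf.comp continuous_fst).add' (hg.comp continuous_snd) fun _ =>
    EReal.continuousAt_add (Or.inr (hg' _)) (Or.inl (hf' _))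

theorem Convex.image_add_sub {E : Type*} [AddCommGroup E] [Module ℝ E] {s : Set E}
    (hs : Convex ℝ s) (a b : E) : Convex ℝ ((fun δ => (a + δ, b - δ)) '' s) := by
  have h : (fun δ => (a + δ, b - δ)) =
      fun δ => (a, b) + (LinearMap.id.prod (-LinearMap.id) : E →ₗ[ℝ] E × E) δ := by
    funext δ
    simp [sub_eq_add_neg]
  rw [h, ← image_image (fun Z => (a, b) + Z)]
  exact (hs.linear_image _).translate _

section Lattice

theorem min_mul_add_max_mul_le {p p' x y e : ℝ} (he₀ : 0 ≤ e) (he : e ≤ max (-(x - y)) 0) :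
    min p p' * y + max p p' * x ≤ p * (y + (if p' < p then max (x - y) 0 else 0) - e) +
      p' * (x - (if p' < p then max (x - y) 0 else 0) + e) := by
  have hd := max_zero_sub_max_neg_zero_eq_self (x - y)
  split_ifs with h
  · rw [min_eq_right h.le, max_eq_left h.le]
    nlinarith [mul_nonneg (sub_nonneg.2 h.le) (sub_nonneg.2 he)]
  · rw [min_eq_left (not_lt.1 h), max_eq_right (not_lt.1 h)]
    nlinarith [mul_nonneg (sub_nonneg.2 (not_lt.1 h)) he₀]

theorem mul_add_mul_le_min_mul_add_max_mul {p p' x y e : ℝ} (he₀ : 0 ≤ e)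
    (he : e ≤ max (x - y) 0) :
    p' * (x - e + (if p' < p then max (-(x - y)) 0 else 0)) +
      p * (y + e - (if p' < p then max (-(x - y)) 0 else 0)) ≤
      min p p' * y + max p p' * x := by
  have hd := max_zero_sub_max_neg_zero_eq_self (x - y)
  split_ifs with h
  · rw [min_eq_right h.le, max_eq_left h.le]
    nlinarith [mul_nonneg (sub_nonneg.2 h.le) (sub_nonneg.2 he)]
  · rw [min_eq_left (not_lt.1 h), max_eq_right (not_lt.1 h)]
    nlinarith [mul_nonneg (sub_nonneg.2 (not_lt.1 h)) he₀]

variable {n : ℕ} {p p' x y δ : Fin n → ℝ}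

theorem posP_nonneg (a : Fin n → ℝ) : 0 ≤ posP a := fun _ => le_max_right _ _

theorem negP_nonneg (a : Fin n → ℝ) : 0 ≤ negP a := fun _ => le_max_right _ _

theorem inf_dotProduct_add_sup_dotProduct_le (hδ₀ : 0 ≤ δ) (hδ : δ ≤ negP (x - y)) :
    (p ⊓ p') ⬝ᵥ y + (p ⊔ p') ⬝ᵥ x ≤
      p ⬝ᵥ (y + {i | p' i < p i}.indicator (posP (x - y)) - δ) +
        p' ⬝ᵥ (x - {i | p' i < p i}.indicator (posP (x - y)) + δ) := by
  simp only [dotProduct, ← Finset.sum_add_distrib]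
  refine Finset.sum_le_sum fun i _ => ?_
  simpa only [Pi.add_apply, Pi.sub_apply, Pi.inf_apply, Pi.sup_apply, indicator_apply,
    mem_ofPred_eq, posP] using min_mul_add_max_mul_le (p := p i) (p' := p' i) (hδ₀ i) (hδ i)

theorem dotProduct_add_dotProduct_le_inf_sup (hδ₀ : 0 ≤ δ) (hδ : δ ≤ posP (x - y)) :
    p' ⬝ᵥ (x - δ + {i | p' i < p i}.indicator (negP (x - y))) +
        p ⬝ᵥ (y + δ - {i | p' i < p i}.indicator (negP (x - y))) ≤
      (p ⊓ p') ⬝ᵥ y + (p ⊔ p') ⬝ᵥ x := by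
  simp only [dotProduct, ← Finset.sum_add_distrib]
  refine Finset.sum_le_sum fun i _ => ?_
  simpa only [Pi.add_apply, Pi.sub_apply, Pi.inf_apply, Pi.sup_apply, indicator_apply,
    mem_ofPred_eq, negP] using
    mul_add_mul_le_min_mul_add_max_mul (p := p i) (p' := p' i) (hδ₀ i) (hδ i)

end Lattice

section Orders

variable {n : ℕ} {f g : (Fin n → ℝ) → EReal}

theorem pleF_conjE_of_qleF (hf : ∀ x, f x ≠ ⊥) (hg : ∀ y, g y ≠ ⊥) (h : QleF f g) :
    PleF (conjE g) (conjE f) := by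
  intro p p' _ _
  refine conjE_add_conjE_le fun y x => ?_
  rcases eq_or_ne (g y) ⊤ with hy | hy
  · simp [hy]
  rcases eq_or_ne (f x) ⊤ with hx | hx
  · simp [hx]
  set δ₁ := {i | p' i < p i}.indicator (posP (x - y))
  obtain ⟨δ₂, hδ₂₀, hδ₂, hle⟩ := h x y hx hy δ₁
    (indicator_nonneg fun i _ => posP_nonneg _ i) (indicator_le_self' fun i _ => posP_nonneg _ i)
  rw [← EReal.coe_toReal hx (hf x), ← EReal.coe_toReal hy (hg y)] at hle ⊢
  obtain ⟨u, w, hu, hw, huw⟩ :=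
    EReal.exists_le_coe_le_coe_of_add_le (hf _) (hg _) (by rwa [← EReal.coe_add] at hle)
  have hlin := inf_dotProduct_add_sup_dotProduct_le (p := p) (p' := p') hδ₂₀ hδ₂
  calc _ = (((p ⊓ p') ⬝ᵥ y - (g y).toReal + ((p ⊔ p') ⬝ᵥ x - (f x).toReal) : ℝ) : EReal) := by
        norm_cast
    _ ≤ ((p ⬝ᵥ (y + δ₁ - δ₂) - w + (p' ⬝ᵥ (x - δ₁ + δ₂) - u) : ℝ) : EReal) := by
        rw [EReal.coe_le_coe_iff]
        linarith
    _ ≤ conjE g p + conjE f p' := by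
        rw [EReal.coe_add]
        exact add_le_add (coe_sub_le_conjE hw p) (coe_sub_le_conjE hu p')

theorem exists_conjE_add_conjE_le_of_lt_on_Icc (hf : ConvexE f) (hf' : ∀ x, f x ≠ ⊥)
    (hf'' : LowerSemicontinuous f) (hg : ConvexE g) (hg' : ∀ y, g y ≠ ⊥)
    (hg'' : LowerSemicontinuous g) {a b v : Fin n → ℝ} {c : ℝ}
    (hlt : ∀ δ ∈ Icc 0 v, (c : EReal) < f (a + δ) + g (b - δ))
    {x₀ y₀ : Fin n → ℝ} {r₀ : ℝ} (h₀ : f x₀ + g y₀ = r₀) :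
    ∃ p' p : Fin n → ℝ, ∃ β : ℝ, conjE f p' + conjE g p ≤ ((-β : ℝ) : EReal) ∧
      ∀ δ ∈ Icc 0 v, c < p' ⬝ᵥ (a + δ) + p ⬝ᵥ (b - δ) + β := by
  have hK : IsCompact ((fun δ => (a + δ, b - δ)) '' Icc 0 v) :=
    isCompact_Icc.image (by fun_prop)
  have hltK : ∀ Z ∈ (fun δ => (a + δ, b - δ)) '' Icc 0 v, (c : EReal) < f Z.1 + g Z.2 := by
    rintro _ ⟨δ, hδ, rfl⟩
    exact hlt δ hδ
  obtain ⟨ℓ, β, hℓ, hℓK⟩ := exists_affine_minorant_gt_on (Φ := fun Z => f Z.1 + g Z.2)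
    (convex_epigraphReal_add_prod hf.convex_epigraphReal hg.convex_epigraphReal hf' hg')
    (hf''.add_prod hg'' hf' hg') ((convex_Icc 0 v).image_add_sub a b) hK hltK
    (z₀ := (x₀, y₀)) h₀
  obtain ⟨p', p, hpp⟩ := ℓ.exists_dotProduct_prod
  refine ⟨p', p, β, conjE_add_conjE_le_of_affine_le fun z w => ?_, fun δ hδ => ?_⟩
  · rw [← hpp]
    exact hℓ (z, w)
  · rw [← hpp]
    exact hℓK _ ⟨δ, hδ, rfl⟩

theorem qleF_of_pleF_conjE (hf : ConvexE f) (hf' : ∀ x, f x ≠ ⊥) (hf'' : LowerSemicontinuous f)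
    (hg : ConvexE g) (hg' : ∀ y, g y ≠ ⊥) (hg'' : LowerSemicontinuous g)
    (h : PleF (conjE g) (conjE f)) : QleF f g := by
  intro x y hx hy δ₁ hδ₁₀ hδ₁
  by_contra! hlt
  obtain ⟨rx, hrx⟩ : ∃ r : ℝ, f x = r := ⟨_, (EReal.coe_toReal hx (hf' x)).symm⟩
  obtain ⟨ry, hry⟩ : ∃ r : ℝ, g y = r := ⟨_, (EReal.coe_toReal hy (hg' y)).symm⟩
  have hf₀ : f x + g y = ((rx + ry : ℝ) : EReal) := by rw [hrx, hry, EReal.coe_add]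
  obtain ⟨p', p, β, hconj, hsep⟩ := exists_conjE_add_conjE_le_of_lt_on_Icc hf hf' hf'' hg hg' hg''
    (a := x - δ₁) (b := y + δ₁) (fun δ hδ => hf₀ ▸ hlt δ hδ.1 hδ.2) hf₀
  obtain ⟨r, s, hr, hs, -⟩ := EReal.exists_le_coe_le_coe_of_add_le
    (conjE_ne_bot hrx.le p') (conjE_ne_bot hry.le p) hconj
  have hP := h p p' (ne_top_of_le_ne_top (EReal.coe_ne_top s) hs)
    (ne_top_of_le_ne_top (EReal.coe_ne_top r) hr)
  have hD := hsep ({i | p' i < p i}.indicator (negP (x - y)))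
    ⟨indicator_nonneg fun i _ => negP_nonneg _ i, indicator_le_self' fun i _ => negP_nonneg _ i⟩
  have hlin := dotProduct_add_dotProduct_le_inf_sup (p := p) (p' := p') hδ₁₀ hδ₁
  have hbound : (((p ⊓ p') ⬝ᵥ y - ry + ((p ⊔ p') ⬝ᵥ x - rx) : ℝ) : EReal) ≤ ((-β : ℝ) : EReal) :=
    calc _ ≤ conjE g (p ⊓ p') + conjE f (p ⊔ p') := by
          rw [EReal.coe_add]
          exact add_le_add (coe_sub_le_conjE hry.le _) (coe_sub_le_conjE hrx.le _)
      _ ≤ conjE g p + conjE f p' := hP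
      _ ≤ _ := by rwa [add_comm]
  rw [EReal.coe_le_coe_iff] at hbound
  linarith

end Orders

/-- If `f` and `g` are convex, closed (lsc), proper functions on `ℝⁿ`, then
`f ≤_Q g` iff `g* ≤_P f*`. -/
theorem qle_iff_conj_ple {n : ℕ} (f g : (Fin n → ℝ) → EReal)
    (hf1 : ConvexE f) (hf2 : ProperE f) (hf3 : LowerSemicontinuous f)
    (hg1 : ConvexE g) (hg2 : ProperE g) (hg3 : LowerSemicontinuous g) :
    QleF f g ↔ PleF (conjE g) (conjE f) :=
  ⟨pleF_conjE_of_qleF hf2.1 hg2.1, qleF_of_pleF_conjE hf1 hf2.1 hf3 hg1 hg2.1 hg3⟩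
end
end

section
/- For two convex compact subsets X, Y of R^n, X ≤_Q Y (i.e., for all x ∈ X, y ∈ Y, and δ₁ ∈ [0,(x−y)⁺] there exists δ₂ ∈ [0,(x−y)⁻] with x−δ₁+δ₂ ∈ X and y+δ₁−δ₂ ∈ Y) holds if and only if σ_Y ≤_P σ_X, where σ_X is the support function of X and σ_Y ≤_P σ_X means σ_Y(d∧d') + σ_X(d∨d') ≤ σ_Y(d) + σ_X(d') for all d, d' ∈ R^n. -/
noncomputable section

/-- The Q-order on sets of `ℝⁿ`. -/
def QleS {n : ℕ} (X Y : Set (Fin n → ℝ)) : Prop :=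
  ∀ x ∈ X, ∀ y ∈ Y, ∀ δ₁ : Fin n → ℝ, 0 ≤ δ₁ → δ₁ ≤ posP (x - y) →
    ∃ δ₂ : Fin n → ℝ, 0 ≤ δ₂ ∧ δ₂ ≤ negP (x - y) ∧
      x - δ₁ + δ₂ ∈ X ∧ y + δ₁ - δ₂ ∈ Y

/-- Support function of a set. -/
def suppF {n : ℕ} (X : Set (Fin n → ℝ)) (d : Fin n → ℝ) : EReal :=
  ⨆ x ∈ X, ((∑ i, x i * d i : ℝ) : EReal)

lemma suppF_exists_max {n : ℕ} {X : Set (Fin n → ℝ)} (hXc : IsCompact X)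
    (hne : X.Nonempty) (d : Fin n → ℝ) :
    ∃ x₀ ∈ X, (∀ x ∈ X, ∑ i, x i * d i ≤ ∑ i, x₀ i * d i) ∧
      suppF X d = ((∑ i, x₀ i * d i : ℝ) : EReal) := by
  have hcont : Continuous fun x : Fin n → ℝ => ∑ i, x i * d i :=
    continuous_finset_sum _ fun i _ => (continuous_apply i).mul continuous_const
  obtain ⟨x₀, hx₀, hmax⟩ := hXc.exists_isMaxOn hne hcont.continuousOn
  refine ⟨x₀, hx₀, fun x hx => hmax hx, le_antisymm ?_ ?_⟩
  · exact iSup₂_le fun x hx => EReal.coe_le_coe_iff.mpr (hmax hx)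
  · exact le_iSup₂ (f := fun x (_ : x ∈ X) => ((∑ i, x i * d i : ℝ) : EReal)) x₀ hx₀

lemma le_suppF {n : ℕ} {X : Set (Fin n → ℝ)} {x : Fin n → ℝ} (hx : x ∈ X) (d : Fin n → ℝ) :
    ((∑ i, x i * d i : ℝ) : EReal) ≤ suppF X d :=
  le_iSup₂ (f := fun x (_ : x ∈ X) => ((∑ i, x i * d i : ℝ) : EReal)) x hx

/-- For convex compact `X, Y ⊆ ℝⁿ`, `X ≤_Q Y` iff `σ_Y ≤_P σ_X`. -/
theorem qleS_iff_support_ple {n : ℕ} (X Y : Set (Fin n → ℝ))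
    (hX : Convex ℝ X) (hXc : IsCompact X)
    (hY : Convex ℝ Y) (hYc : IsCompact Y) :
    QleS X Y ↔
      ∀ d d' : Fin n → ℝ,
        suppF Y (d ⊓ d') + suppF X (d ⊔ d') ≤ suppF Y d + suppF X d' := by
  constructor
  · intro hQ d d'
    rcases X.eq_empty_or_nonempty with rfl | hXne
    · simp [suppF]
    rcases Y.eq_empty_or_nonempty with rfl | hYne
    · simp [suppF]
    obtain ⟨y₀, hy₀, _, hy₀eq⟩ := suppF_exists_max hYc hYne (d ⊓ d')
    obtain ⟨x₀, hx₀, _, hx₀eq⟩ := suppF_exists_max hXc hXne (d ⊔ d')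
    set δ₁ : Fin n → ℝ := fun i => if d' i < d i then max (x₀ i - y₀ i) 0 else 0 with hδ₁
    have h0 : 0 ≤ δ₁ := by
      intro i; dsimp [δ₁]; split
      · exact le_max_right _ _
      · exact le_refl _
    have h1 : δ₁ ≤ posP (x₀ - y₀) := by
      intro i; dsimp [δ₁, posP]; split
      · exact le_refl _
      · exact le_max_right _ _
    obtain ⟨δ₂, hδ₂0, hδ₂le, hx', hy'⟩ := hQ x₀ hx₀ y₀ hy₀ δ₁ h0 h1
    have key : (∑ i, y₀ i * (d ⊓ d') i) + (∑ i, x₀ i * (d ⊔ d') i) ≤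
        (∑ i, (y₀ + δ₁ - δ₂) i * d i) + (∑ i, (x₀ - δ₁ + δ₂) i * d' i) := by
      rw [← Finset.sum_add_distrib, ← Finset.sum_add_distrib]
      apply Finset.sum_le_sum; intro i _
      have h2 : (0:ℝ) ≤ δ₂ i := hδ₂0 i
      have h2' := hδ₂le i
      simp only [negP, Pi.sub_apply] at h2'
      simp only [Pi.inf_apply, Pi.sup_apply, Pi.add_apply, Pi.sub_apply, hδ₁]
      rcases lt_or_ge (d' i) (d i) with hd | hd
      · rw [if_pos hd, inf_eq_right.mpr hd.le, sup_eq_left.mpr hd.le]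
        rcases le_total (y₀ i) (x₀ i) with h | h
        · rw [sup_eq_left.mpr (by linarith : (0:ℝ) ≤ x₀ i - y₀ i)]
          rw [sup_eq_right.mpr (by linarith : -(x₀ i - y₀ i) ≤ (0:ℝ))] at h2'
          have hz : δ₂ i = 0 := le_antisymm h2' h2
          rw [hz]; ring_nf; linarith [le_refl (0:ℝ)]
        · rw [sup_eq_right.mpr (by linarith : x₀ i - y₀ i ≤ (0:ℝ))]
          rw [sup_eq_left.mpr (by linarith : (0:ℝ) ≤ -(x₀ i - y₀ i))] at h2'
          nlinarith [mul_nonneg (by linarith : (0:ℝ) ≤ y₀ i - x₀ i - δ₂ i)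
            (by linarith : (0:ℝ) ≤ d i - d' i)]
      · rw [if_neg (not_lt.mpr hd), inf_eq_left.mpr hd, sup_eq_right.mpr hd]
        nlinarith [mul_nonneg h2 (sub_nonneg.mpr hd)]
    calc suppF Y (d ⊓ d') + suppF X (d ⊔ d')
        = (((∑ i, y₀ i * (d ⊓ d') i) + (∑ i, x₀ i * (d ⊔ d') i) : ℝ) : EReal) := by
          rw [hy₀eq, hx₀eq, EReal.coe_add]
      _ ≤ (((∑ i, (y₀ + δ₁ - δ₂) i * d i) + (∑ i, (x₀ - δ₁ + δ₂) i * d' i) : ℝ) : EReal) :=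
          EReal.coe_le_coe_iff.mpr key
      _ = (((∑ i, (y₀ + δ₁ - δ₂) i * d i : ℝ)) : EReal) + ((∑ i, (x₀ - δ₁ + δ₂) i * d' i : ℝ) : EReal) :=
          EReal.coe_add _ _
      _ ≤ suppF Y d + suppF X d' := add_le_add (le_suppF hy' d) (le_suppF hx' d')
  · intro hP x hx y hy δ₁ hδ₁0 hδ₁le
    by_contra hcon
    push_neg at hcon
    set m : Fin n → ℝ := x - δ₁ with hm
    set Mx : Fin n → ℝ := x - δ₁ + negP (x - y) with hMx
    have hmM : m ≤ Mx := by
      intro i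
      simp only [hm, hMx, Pi.add_apply, Pi.sub_apply, negP]
      have := le_max_right (-(x i - y i)) 0
      linarith
    have hxm : ∀ i, m i ≤ x i := by
      intro i
      have := hδ₁0 i
      simp only [hm, Pi.sub_apply]
      simp only [Pi.zero_apply] at this
      linarith
    have hMy : ∀ i, y i ≤ Mx i := by
      intro i
      have h1 : (0:ℝ) ≤ δ₁ i := hδ₁0 i
      have h2 := hδ₁le i
      simp only [posP, Pi.sub_apply] at h2
      simp only [hMx, Pi.add_apply, Pi.sub_apply, negP]
      rcases le_total (x i) (y i) with h | h
      · rw [sup_eq_right.mpr (by linarith : x i - y i ≤ (0:ℝ))] at h2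
        rw [sup_eq_left.mpr (by linarith : (0:ℝ) ≤ -(x i - y i))]
        linarith
      · rw [sup_eq_left.mpr (by linarith : (0:ℝ) ≤ x i - y i)] at h2
        have := le_max_right (-(x i - y i)) 0
        linarith
    set B : Set (Fin n → ℝ) := Set.Icc m Mx with hB
    set T : Set ((Fin n → ℝ) × (Fin n → ℝ)) := (fun u => (u, x + y - u)) '' B with hT
    have hdisj : Disjoint (X ×ˢ Y) T := by
      rw [Set.disjoint_left]
      rintro ⟨u, v⟩ ⟨hu, hv⟩ ⟨w, hw, heq⟩
      simp only [Prod.mk.injEq] at heq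
      obtain ⟨rfl, rfl⟩ := heq
      have hMm : Mx = m + negP (x - y) := by rw [hMx, hm]
      refine hcon (w - m) (sub_nonneg.mpr hw.1) (sub_le_iff_le_add'.mpr (hMm ▸ hw.2)) ?_ ?_
      · have he : x - δ₁ + (w - m) = w := by rw [hm]; abel
        rw [he]; exact hu
      · have he : y + δ₁ - (w - m) = x + y - w := by rw [hm]; abel
        rw [he]; exact hv
    have hScomp : IsCompact (X ×ˢ Y) := hXc.prod hYc
    have hSconv : Convex ℝ (X ×ˢ Y) := hX.prod hY
    have hBcomp : IsCompact B := isCompact_Icc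
    have hTclosed : IsClosed T := by
      have : IsCompact T :=
        hBcomp.image (continuous_id.prodMk (continuous_const.sub continuous_id))
      exact this.isClosed
    have hTconv : Convex ℝ T := by
      rintro _ ⟨u₁, h₁, rfl⟩ _ ⟨u₂, h₂, rfl⟩ a b ha hb hab
      refine ⟨a • u₁ + b • u₂, (convex_Icc m Mx) h₁ h₂ ha hb hab, ?_⟩
      have hsnd : a • (x + y - u₁) + b • (x + y - u₂) = x + y - (a • u₁ + b • u₂) := by
        rw [smul_sub, smul_sub]
        have h : a • (x + y) + b • (x + y) = x + y := by
          rw [← add_smul, hab, one_smul]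
        calc a • (x + y) - a • u₁ + (b • (x + y) - b • u₂)
            = a • (x + y) + b • (x + y) - (a • u₁ + b • u₂) := by abel
          _ = x + y - (a • u₁ + b • u₂) := by rw [h]
      simp only [Prod.smul_mk, Prod.mk_add_mk, smul_eq_mul]
      exact Prod.ext rfl hsnd.symm
    obtain ⟨f, u, v, hfu, huv, hvf⟩ :=
      geometric_hahn_banach_compact_closed hSconv hScomp hTconv hTclosed hdisj
    set c₁ : Fin n → ℝ := fun i => f ((Pi.single i 1 : Fin n → ℝ), (0 : Fin n → ℝ)) with hc₁
    set c₂ : Fin n → ℝ := fun i => f ((0 : Fin n → ℝ), (Pi.single i 1 : Fin n → ℝ)) with hc₂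
    have hf : ∀ w z : Fin n → ℝ, f (w, z) = (∑ i, w i * c₁ i) + ∑ i, z i * c₂ i := by
      intro w z
      have hw : (w, z) = (∑ i, w i • (((Pi.single i 1 : Fin n → ℝ), (0 : Fin n → ℝ)) :
            (Fin n → ℝ) × (Fin n → ℝ))) +
          ∑ i, z i • ((((0 : Fin n → ℝ), (Pi.single i 1 : Fin n → ℝ))) :
            (Fin n → ℝ) × (Fin n → ℝ)) := by
        apply Prod.ext
        · simp only [Prod.fst_sum, Prod.fst_add, Prod.smul_mk, Prod.fst_sum]
          funext j
          simp [Finset.sum_apply, Pi.single_apply, mul_comm]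
        · simp only [Prod.snd_sum, Prod.snd_add, Prod.smul_mk, Prod.snd_sum]
          funext j
          simp [Finset.sum_apply, Pi.single_apply, mul_comm]
      rw [hw, map_add, map_sum, map_sum]
      congr 1 <;> · apply Finset.sum_congr rfl; intro i _; rw [map_smul]; simp [hc₁, hc₂, mul_comm]
    set b₀ : Fin n → ℝ := fun i => if 0 ≤ c₂ i - c₁ i then Mx i else m i with hb₀
    have hb₀B : b₀ ∈ B := by
      constructor <;> intro i <;> dsimp [b₀] <;> split <;>
        first | exact hmM i | exact le_refl _
    obtain ⟨x₁, hx₁, _, hx₁eq⟩ := suppF_exists_max hXc ⟨x, hx⟩ c₁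
    obtain ⟨y₂, hy₂, _, hy₂eq⟩ := suppF_exists_max hYc ⟨y, hy⟩ c₂
    -- real-valued consequence of hP
    have h1 : (∑ i, y i * (c₂ ⊓ c₁) i) + (∑ i, x i * (c₂ ⊔ c₁) i) ≤
        (∑ i, y₂ i * c₂ i) + (∑ i, x₁ i * c₁ i) := by
      have hPc := hP c₂ c₁
      rw [hy₂eq, hx₁eq] at hPc
      have hL : (((∑ i, y i * (c₂ ⊓ c₁) i) + (∑ i, x i * (c₂ ⊔ c₁) i) : ℝ) : EReal) ≤
          suppF Y (c₂ ⊓ c₁) + suppF X (c₂ ⊔ c₁) := by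
        rw [EReal.coe_add]
        exact add_le_add (le_suppF hy _) (le_suppF hx _)
      have := hL.trans hPc
      rw [← EReal.coe_add] at this
      exact EReal.coe_le_coe_iff.mp this
    have h2 : (∑ i, x₁ i * c₁ i) + (∑ i, y₂ i * c₂ i) <
        (∑ i, b₀ i * c₁ i) + ∑ i, (x + y - b₀) i * c₂ i := by
      have ha := hfu (x₁, y₂) (Set.mk_mem_prod hx₁ hy₂)
      have hb := hvf (b₀, x + y - b₀) ⟨b₀, hb₀B, rfl⟩
      rw [hf] at ha hb
      linarith
    have h3 : ∀ i, b₀ i * c₁ i + (x + y - b₀) i * c₂ i ≤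
        y i * (c₂ ⊓ c₁) i + x i * (c₂ ⊔ c₁) i := by
      intro i
      have hMyi := hMy i
      have hxmi := hxm i
      simp only [Pi.inf_apply, Pi.sup_apply, Pi.add_apply, Pi.sub_apply, hb₀]
      split
      · next hc =>
        rw [inf_eq_right.mpr (by linarith : c₁ i ≤ c₂ i),
          sup_eq_left.mpr (by linarith : c₁ i ≤ c₂ i)]
        nlinarith [mul_nonneg (by linarith : (0:ℝ) ≤ Mx i - y i) hc]
      · next hc =>
        push_neg at hc
        rw [inf_eq_left.mpr (by linarith : c₂ i ≤ c₁ i),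
          sup_eq_right.mpr (by linarith : c₂ i ≤ c₁ i)]
        nlinarith [mul_nonneg (by linarith : (0:ℝ) ≤ x i - m i)
          (by linarith : (0:ℝ) ≤ c₁ i - c₂ i)]
    have h4 : (∑ i, b₀ i * c₁ i) + (∑ i, (x + y - b₀) i * c₂ i) ≤
        (∑ i, y i * (c₂ ⊓ c₁) i) + ∑ i, x i * (c₂ ⊔ c₁) i := by
      rw [← Finset.sum_add_distrib, ← Finset.sum_add_distrib]
      exact Finset.sum_le_sum fun i _ => h3 i
    linarith
end
end

section
/- Let c: R^n → R ∪ {+∞} be convex, closed, proper, lsc, and exchangeable (c ≤_Q c). Fix p ≤ p' in R^n and q̄ ≤ q̄' in R^n, and define ψ(u) = c(q̄−u) + ⟨p,u⟩ and ψ'(u) = c(q̄'−u) + ⟨p',u⟩ restricted to u ≥ 0. Then ψ ≤_{D,Q} ψ' where D = {i : p_i = p'_i}; i.e., for all u ∈ dom ψ, u' ∈ dom ψ', and δ₁ ∈ [0,(u−u')⁺] supported in D, there exists δ₂ ∈ [0,(u−u')⁻] with ψ(u−δ₁+δ₂) + ψ'(u'+δ₁−δ₂) ≤ ψ(u) + ψ'(u').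 -/
open scoped Classical

noncomputable section


/-- `c` is exchangeable (`c ≤_Q c`). -/
def Exchangeable {n : ℕ} (c : (Fin n → ℝ) → EReal) : Prop :=
  ∀ q q' : Fin n → ℝ, c q ≠ ⊤ → c q' ≠ ⊤ →
    ∀ δ₁ : Fin n → ℝ, 0 ≤ δ₁ → δ₁ ≤ posP (q - q') →
      ∃ δ₂ : Fin n → ℝ, 0 ≤ δ₂ ∧ δ₂ ≤ negP (q - q') ∧
        c (q - δ₁ + δ₂) + c (q' + δ₁ - δ₂) ≤ c q + c q'

/-- If `c` is exchangeable then `ψ ≤_{D,Q} ψ'` where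
`ψ(u) = c(q̄−u) + ⟨p,u⟩`, `ψ'(u) = c(q̄'−u) + ⟨p',u⟩` on `u ≥ 0`,
and `D = {i : p_i = p'_i}`. -/
theorem exchangeable_imp_psi_qle {n : ℕ} (c : (Fin n → ℝ) → EReal)
    (hc1 : ConvexE c) (hc2 : ProperE c) (hc3 : LowerSemicontinuous c)
    (hex : Exchangeable c)
    (p p' qbar qbar' : Fin n → ℝ) (hp : p ≤ p') (hq : qbar ≤ qbar')
    (ψ ψ' : (Fin n → ℝ) → EReal)
    (hψ : ∀ u, ψ u = if 0 ≤ u then c (qbar - u) + ((∑ i, p i * u i : ℝ) : EReal) else ⊤)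
    (hψ' : ∀ u, ψ' u = if 0 ≤ u then c (qbar' - u) + ((∑ i, p' i * u i : ℝ) : EReal) else ⊤) :
    ∀ u u' : Fin n → ℝ, ψ u ≠ ⊤ → ψ' u' ≠ ⊤ →
      ∀ δ₁ : Fin n → ℝ, 0 ≤ δ₁ → δ₁ ≤ posP (u - u') →
        (∀ i, p i ≠ p' i → δ₁ i = 0) →
        ∃ δ₂ : Fin n → ℝ, 0 ≤ δ₂ ∧ δ₂ ≤ negP (u - u') ∧
          ψ (u - δ₁ + δ₂) + ψ' (u' + δ₁ - δ₂) ≤ ψ u + ψ' u' := by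

  intro u u' hu hu' δ₁ hδ₁0 hδ₁le hD
  have hu0 : 0 ≤ u := by
    by_contra h; rw [hψ u, if_neg h] at hu; exact hu rfl
  have hu'0 : 0 ≤ u' := by
    by_contra h; rw [hψ' u', if_neg h] at hu'; exact hu' rfl
  rw [hψ u, if_pos hu0] at hu
  rw [hψ' u', if_pos hu'0] at hu'
  have hcu : c (qbar - u) ≠ ⊤ := by
    intro h; rw [h, EReal.top_add_coe] at hu; exact hu rfl
  have hcu' : c (qbar' - u') ≠ ⊤ := by
    intro h; rw [h, EReal.top_add_coe] at hu'; exact hu' rfl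
  have hδ₁le' : δ₁ ≤ posP ((qbar' - u') - (qbar - u)) := by
    intro i
    refine le_trans (hδ₁le i) ?_
    simp only [posP, Pi.sub_apply]
    exact max_le_max (by have := hq i; linarith) le_rfl
  obtain ⟨δ₂, hδ₂0, hδ₂le, hkey⟩ := hex (qbar' - u') (qbar - u) hcu' hcu δ₁ hδ₁0 hδ₁le'
  have hδ₂le2 : δ₂ ≤ negP (u - u') := by
    intro i
    refine le_trans (hδ₂le i) ?_
    simp only [negP, Pi.sub_apply]
    exact max_le_max (by have := hq i; linarith) le_rfl
  refine ⟨δ₂, hδ₂0, hδ₂le2, ?_⟩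
  have hδ₁u : ∀ i, δ₁ i ≤ u i := by
    intro i
    refine le_trans (hδ₁le i) ?_
    simp only [posP, Pi.sub_apply]
    have h1 := hu0 i; have h2 := hu'0 i
    simp only [Pi.zero_apply] at h1 h2
    exact max_le (by linarith) h1
  have hδ₂u : ∀ i, δ₂ i ≤ u' i := by
    intro i
    refine le_trans (hδ₂le2 i) ?_
    simp only [negP, Pi.sub_apply]
    have h1 := hu0 i; have h2 := hu'0 i
    simp only [Pi.zero_apply] at h1 h2
    exact max_le (by linarith) h2
  have hpos1 : 0 ≤ u - δ₁ + δ₂ := by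
    intro i
    have := hδ₁u i; have := hδ₂0 i
    simp only [Pi.add_apply, Pi.sub_apply, Pi.zero_apply] at *
    linarith
  have hpos2 : 0 ≤ u' + δ₁ - δ₂ := by
    intro i
    have := hδ₂u i; have := hδ₁0 i
    simp only [Pi.add_apply, Pi.sub_apply, Pi.zero_apply] at *
    linarith
  rw [hψ, hψ', hψ, hψ', if_pos hu0, if_pos hu'0, if_pos hpos1, if_pos hpos2]
  have e1 : qbar - (u - δ₁ + δ₂) = (qbar - u) + δ₁ - δ₂ := by abel
  have e2 : qbar' - (u' + δ₁ - δ₂) = (qbar' - u') - δ₁ + δ₂ := by abel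
  rw [e1, e2]
  have hlin : (∑ i, p i * (u - δ₁ + δ₂) i) + ∑ i, p' i * (u' + δ₁ - δ₂) i ≤
      (∑ i, p i * u i) + ∑ i, p' i * u' i := by
    rw [← Finset.sum_add_distrib, ← Finset.sum_add_distrib]
    apply Finset.sum_le_sum
    intro i _
    simp only [Pi.add_apply, Pi.sub_apply]
    by_cases h : p i = p' i
    · rw [h]; ring_nf; rfl
    · have h1 := hD i h
      have h2 := hp i
      have h3 := hδ₂0 i
      simp only [Pi.zero_apply] at h3
      nlinarith [mul_nonneg (sub_nonneg.mpr h2) h3]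
  have hkey' : c ((qbar - u) + δ₁ - δ₂) + c ((qbar' - u') - δ₁ + δ₂) ≤
      c (qbar - u) + c (qbar' - u') := by
    rw [add_comm (c ((qbar - u) + δ₁ - δ₂)), add_comm (c (qbar - u))]
    exact hkey
  calc c ((qbar - u) + δ₁ - δ₂) + ((∑ i, p i * (u - δ₁ + δ₂) i : ℝ) : EReal)
        + (c ((qbar' - u') - δ₁ + δ₂) + ((∑ i, p' i * (u' + δ₁ - δ₂) i : ℝ) : EReal))
      = (c ((qbar - u) + δ₁ - δ₂) + c ((qbar' - u') - δ₁ + δ₂))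
        + (((∑ i, p i * (u - δ₁ + δ₂) i) + ∑ i, p' i * (u' + δ₁ - δ₂) i : ℝ) : EReal) := by
        rw [EReal.coe_add]; exact add_add_add_comm _ _ _ _
    _ ≤ (c (qbar - u) + c (qbar' - u'))
        + (((∑ i, p i * u i) + ∑ i, p' i * u' i : ℝ) : EReal) :=
        add_le_add hkey' (EReal.coe_le_coe_iff.mpr hlin)
    _ = c (qbar - u) + ((∑ i, p i * u i : ℝ) : EReal)
        + (c (qbar' - u') + ((∑ i, p' i * u' i : ℝ) : EReal)) := by
        rw [EReal.coe_add]; exact (add_add_add_comm _ _ _ _).symm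
end
end

section
/- Let c* : R^n → R be convex with directional derivatives (c*)'(p,·). If for every pair p ≤ p' with D = {i : p_i = p'_i}, the directional derivative functions satisfy (c*)'(p,·) ≤_{D,P} (c*)'(p',·) (i.e., for all λ ∈ R^n and d_1, d_2 supported on D, (c*)'(p, λ+d_1∧d_2) + (c*)'(p', λ+d_1∨d_2) ≤ (c*)'(p, λ+d_1) + (c*)'(p', λ+d_2)), then c* is submodular. -/
/-!
Put `m = a ⊓ b` and `u = a - m ≥ 0`, so that `a = m + u` and `a ⊔ b = b + u`. Where `m` and
`b` differ, `m i = a i`, so `u` is supported on the set where the comparable points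
`m + t • u ≤ b + t • u` agree. The `(D,P)`-condition with `d₁ = u`, `d₂ = 0` then says that
the right derivative of `t ↦ f (b + t • u)` is at most that of `t ↦ f (m + t • u)`. Since `f`
is convex, hence continuous, the mean value theorem on `[0, 1]` gives
`f (a ⊔ b) - f b ≤ f a - f (a ⊓ b)`.
-/

open Filter Set Topology

section DirectionalDerivative

variable {E : Type*} [AddCommGroup E] [Module ℝ E]

lemma hasDerivWithinAt_Ici_of_tendsto_slope {f : E → ℝ} {x d : E} {s L : ℝ}
    (hf : Tendsto (fun t : ℝ => (f (x + s • d + t • d) - f (x + s • d)) / t) (𝓝[>] 0) (𝓝 L)) :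
    HasDerivWithinAt (fun t : ℝ => f (x + t • d)) L (Ici s) s := by
  rw [← hasDerivWithinAt_Ioi_iff_Ici, hasDerivWithinAt_iff_tendsto_slope' self_notMem_Ioi]
  have hshift : Tendsto (· - s) (𝓝[>] s) (𝓝[>] 0) := by
    refine tendsto_nhdsWithin_iff.2
      ⟨?_, eventually_mem_nhdsWithin.mono fun _ ht => mem_Ioi.2 (sub_pos.2 ht)⟩
    exact ((continuous_sub_right s).tendsto' s 0 (sub_self s)).mono_left nhdsWithin_le_nhds
  refine (hf.comp hshift).congr fun t => ?_
  simp only [Function.comp_apply, slope_def_field, add_assoc, ← add_smul, add_sub_cancel]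

lemma dirDeriv_zero_eq_zero {f : E → ℝ} {x : E} {L : ℝ}
    (hf : Tendsto (fun t : ℝ => (f (x + t • (0 : E)) - f x) / t) (𝓝[>] 0) (𝓝 L)) : L = 0 :=
  tendsto_nhds_unique hf (by simp)

variable [TopologicalSpace E] [ContinuousAdd E] [ContinuousSMul ℝ E]

lemma sub_le_sub_of_dirDeriv_le {f : E → ℝ} {f' : E → E → ℝ} (hcont : Continuous f)
    (hf' : ∀ p d : E, Tendsto (fun t : ℝ => (f (p + t • d) - f p) / t) (𝓝[>] 0) (𝓝 (f' p d)))
    {x y u : E} (hle : ∀ t ∈ Ico (0 : ℝ) 1, f' (y + t • u) u ≤ f' (x + t • u) u) :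
    f (y + u) - f y ≤ f (x + u) - f x := by
  have hline : ∀ z : E, Continuous fun t : ℝ => f (z + t • u) - f z := fun z => by fun_prop
  have hderiv : ∀ z : E, ∀ t : ℝ,
      HasDerivWithinAt (fun t : ℝ => f (z + t • u) - f z) (f' (z + t • u) u) (Ici t) t :=
    fun z t => (hasDerivWithinAt_Ici_of_tendsto_slope (hf' _ u)).sub_const (f z)
  simpa using image_le_of_deriv_right_le_deriv_boundary (hline y).continuousOn
    (fun t _ => hderiv y t) (by simp) (hline x).continuousOn (fun t _ => hderiv x t) hle
    (right_mem_Icc.2 zero_le_one)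

end DirectionalDerivative

lemma sup_eq_add_sub_inf {α : Type*} [AddCommGroup α] [Lattice α] [AddLeftMono α] (a b : α) :
    a ⊔ b = b + (a - a ⊓ b) := by
  rw [add_sub, add_comm b a, ← inf_add_sup a b, add_sub_cancel_left]

lemma dirDeriv_le_of_ple {ι : Type*} {f' : (ι → ℝ) → (ι → ℝ) → ℝ} (hzero : ∀ q, f' q 0 = 0)
    {p p' : ι → ℝ}
    (h : ∀ l d₁ d₂ : ι → ℝ, (∀ i, p i ≠ p' i → d₁ i = 0) → (∀ i, p i ≠ p' i → d₂ i = 0) →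
      f' p (l + d₁ ⊓ d₂) + f' p' (l + d₁ ⊔ d₂) ≤ f' p (l + d₁) + f' p' (l + d₂))
    {u : ι → ℝ} (hu : 0 ≤ u) (hsupp : ∀ i, p i ≠ p' i → u i = 0) : f' p' u ≤ f' p u := by
  have := h 0 u 0 hsupp fun _ _ => rfl
  simp only [inf_eq_right.2 hu, sup_eq_left.2 hu, zero_add, hzero] at this
  linarith

/-- If the one-sided directional derivatives of a convex function `f` satisfy the
`(D,P)`-order condition along comparable pairs, then `f` is submodular. -/
theorem submodular_of_dirDeriv_ple {n : ℕ} (f : (Fin n → ℝ) → ℝ)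
    (hconv : ConvexOn ℝ Set.univ f)
    (f' : (Fin n → ℝ) → (Fin n → ℝ) → ℝ)
    (hf' : ∀ p d : Fin n → ℝ,
      Tendsto (fun t : ℝ => (f (p + t • d) - f p) / t) (nhdsWithin 0 (Set.Ioi 0))
        (nhds (f' p d)))
    (h : ∀ p p' : Fin n → ℝ, p ≤ p' →
      ∀ l d₁ d₂ : Fin n → ℝ,
        (∀ i, p i ≠ p' i → d₁ i = 0) → (∀ i, p i ≠ p' i → d₂ i = 0) →
        f' p (l + d₁ ⊓ d₂) + f' p' (l + d₁ ⊔ d₂) ≤ f' p (l + d₁) + f' p' (l + d₂)) :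
    ∀ a b : Fin n → ℝ, f (a ⊔ b) + f (a ⊓ b) ≤ f a + f b := by
  intro a b
  have hcont : Continuous f := continuousOn_univ.1 (hconv.continuousOn isOpen_univ)
  have hzero : ∀ p, f' p 0 = 0 := fun p => dirDeriv_zero_eq_zero (hf' p 0)
  set u := a - a ⊓ b
  have hu : 0 ≤ u := sub_nonneg.2 inf_le_left
  have hsupp : ∀ i, (a ⊓ b) i ≠ b i → u i = 0 := fun i hi => by
    have hab : a i ≤ b i := le_of_not_ge fun hba => hi (inf_eq_right.2 hba)
    simp [u, inf_eq_left.2 hab]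
  have hle : ∀ t ∈ Ico (0 : ℝ) 1, f' (b + t • u) u ≤ f' (a ⊓ b + t • u) u := fun t _ =>
    dirDeriv_le_of_ple hzero (h (a ⊓ b + t • u) (b + t • u) (add_le_add_left inf_le_right _)) hu
      fun i hi => hsupp i fun he => hi (by simp [he])
  have hinc := sub_le_sub_of_dirDeriv_le hcont hf' hle
  rw [← sup_eq_add_sub_inf, add_sub_cancel] at hinc
  linarith
end

section
/- Let X, Y be nonempty subsets of R^n with X ≤_Q Y. Then for every y ∈ Y there exists x ∈ X with x ≤ y componentwise, and for every x ∈ X there exists y ∈ Y with x ≤ y componentwise. -/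
lemma qleS_key {n : ℕ} (X Y : Set (Fin n → ℝ)) (h : QleS X Y)
    {x y : Fin n → ℝ} (hx : x ∈ X) (hy : y ∈ Y) :
    (∃ x' ∈ X, x' ≤ y) ∧ (∃ y' ∈ Y, x ≤ y') := by
  obtain ⟨δ₂, h0, hneg, hX', hY'⟩ := h x hx y hy (posP (x - y))
    (fun i => le_max_right _ _) (le_refl _)
  have hle : ∀ i, (x - posP (x - y) + δ₂) i ≤ y i := by
    intro i
    have h0i := h0 i
    have hni := hneg i
    simp only [posP, negP, Pi.sub_apply, Pi.add_apply, Pi.zero_apply] at *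
    rcases le_total (y i) (x i) with hc | hc
    · have : max (-(x i - y i)) 0 = 0 := max_eq_right (by linarith)
      rw [this] at hni
      have : max (x i - y i) 0 = x i - y i := max_eq_left (by linarith)
      rw [this]; linarith
    · have : max (x i - y i) 0 = 0 := max_eq_right (by linarith)
      rw [this]
      have : max (-(x i - y i)) 0 = -(x i - y i) := max_eq_left (by linarith)
      rw [this] at hni; linarith
  have hge : ∀ i, x i ≤ (y + posP (x - y) - δ₂) i := by
    intro i
    have h0i := h0 i
    have hni := hneg i
    simp only [posP, negP, Pi.sub_apply, Pi.add_apply, Pi.zero_apply] at *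
    rcases le_total (y i) (x i) with hc | hc
    · have : max (-(x i - y i)) 0 = 0 := max_eq_right (by linarith)
      rw [this] at hni
      have : max (x i - y i) 0 = x i - y i := max_eq_left (by linarith)
      rw [this]; linarith
    · have : max (x i - y i) 0 = 0 := max_eq_right (by linarith)
      rw [this]
      have : max (-(x i - y i)) 0 = -(x i - y i) := max_eq_left (by linarith)
      rw [this] at hni; linarith
  exact ⟨⟨_, hX', fun i => hle i⟩, ⟨_, hY', fun i => hge i⟩⟩

/-- If `X ≤_Q Y` with `X, Y` nonempty, every `y ∈ Y` dominates some `x ∈ X`,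
and every `x ∈ X` is dominated by some `y ∈ Y`. -/
theorem qleS_dominating_elements {n : ℕ} (X Y : Set (Fin n → ℝ))
    (hXne : X.Nonempty) (hYne : Y.Nonempty) (h : QleS X Y) :
    (∀ y ∈ Y, ∃ x ∈ X, x ≤ y) ∧ (∀ x ∈ X, ∃ y ∈ Y, x ≤ y) := by
  obtain ⟨x₀, hx₀⟩ := hXne
  obtain ⟨y₀, hy₀⟩ := hYne
  exact ⟨fun y hy => (qleS_key X Y h hx₀ hy).1,
         fun x hx => (qleS_key X Y h hx hy₀).2⟩
end

section
/- The function G(α) = Σ_x n_x · log(1 + Σ_y exp(α_{xy})), defined on R^{X×Y} with n_x > 0, is convex and submodular. -/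
/-!
Write `1 + ∑ y, exp a_y = ∑ o : Option Y, exp (ā o)`, where `ā` extends `a` by `0` at the outside
option `none`; `a ↦ ā` is linear and commutes with `⊔` and `⊓`. Both properties also pass from a
function `F` of `a : Y → ℝ` to `α ↦ ∑ x, n x * F (α (x, ·))` when `n ≥ 0`, so it suffices that
log-sum-exp is convex and submodular.
Convexity is Hölder's inequality `∑ exp (p f + q g) ≤ (∑ exp f) ^ p (∑ exp g) ^ q`, proved termwise
by weighted AM-GM. Submodularity is `(∑ a ⊔ b) (∑ a ⊓ b) ≤ (∑ a) (∑ b)` for `a = exp ∘ f`,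
`b = exp ∘ g`, which follows by symmetrising the double sum from the case of two indices,
`(a ⊔ b) (c ⊓ d) + (c ⊔ d) (a ⊓ b) ≤ a d + c b`.
-/

open Real Finset

noncomputable def logSumExp {ι : Type*} [Fintype ι] (f : ι → ℝ) : ℝ :=
  log (∑ i, exp (f i))

def IsSubmodular {α β : Type*} [Lattice α] [Add β] [LE β] (f : α → β) : Prop :=
  ∀ a b, f (a ⊔ b) + f (a ⊓ b) ≤ f a + f b

theorem sup_mul_inf_add_sup_mul_inf_le (a b c d : ℝ) :
    (a ⊔ b) * (c ⊓ d) + (c ⊔ d) * (a ⊓ b) ≤ a * d + c * b := by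
  rcases le_total a b with hab | hab <;> rcases le_total c d with hcd | hcd <;>
    simp only [sup_of_le_left, sup_of_le_right, inf_of_le_left, inf_of_le_right, hab, hcd] <;>
    nlinarith

theorem sum_sup_mul_sum_inf_le {ι : Type*} (s : Finset ι) (a b : ι → ℝ) :
    (∑ i ∈ s, (a ⊔ b) i) * ∑ i ∈ s, (a ⊓ b) i ≤ (∑ i ∈ s, a i) * ∑ i ∈ s, b i := by
  have h := sum_le_sum fun i (_ : i ∈ s) => sum_le_sum fun j (_ : j ∈ s) =>
    sup_mul_inf_add_sup_mul_inf_le (a i) (b i) (a j) (b j)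
  simp only [sum_add_distrib] at h
  rw [sum_comm (f := fun i j => (a j ⊔ b j) * (a i ⊓ b i)),
    sum_comm (f := fun i j => a j * b i)] at h
  simp only [← sum_mul_sum, ← Pi.sup_apply, ← Pi.inf_apply] at h
  linarith

section LogSumExp

variable {ι : Type*} [Fintype ι] [Nonempty ι]

theorem sum_exp_pos (f : ι → ℝ) : 0 < ∑ i, exp (f i) :=
  sum_pos (fun _ _ => exp_pos _) univ_nonempty

theorem sum_exp_mul_add_mul_le (f g : ι → ℝ) {p q : ℝ} (hp : 0 ≤ p) (hq : 0 ≤ q)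
    (hpq : p + q = 1) :
    ∑ i, exp (p * f i + q * g i) ≤ (∑ i, exp (f i)) ^ p * (∑ i, exp (g i)) ^ q := by
  set A := ∑ i, exp (f i)
  set B := ∑ i, exp (g i)
  have hA : 0 < A := sum_exp_pos f
  have hB : 0 < B := sum_exp_pos g
  have termwise : ∀ i, exp (p * f i + q * g i) ≤
      A ^ p * B ^ q * (p * (exp (f i) / A) + q * (exp (g i) / B)) := by
    intro i
    have amgm := geom_mean_le_arith_mean2_weighted hp hq
      (div_nonneg (exp_pos (f i)).le hA.le) (div_nonneg (exp_pos (g i)).le hB.le) hpq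
    calc exp (p * f i + q * g i)
        = A ^ p * B ^ q * ((exp (f i) / A) ^ p * (exp (g i) / B) ^ q) := by
          rw [div_rpow (exp_pos _).le hA.le, div_rpow (exp_pos _).le hB.le, ← exp_mul,
            ← exp_mul, exp_add, mul_comm p, mul_comm q]
          field_simp
      _ ≤ A ^ p * B ^ q * (p * (exp (f i) / A) + q * (exp (g i) / B)) := by gcongr
  calc ∑ i, exp (p * f i + q * g i)
      ≤ ∑ i, A ^ p * B ^ q * (p * (exp (f i) / A) + q * (exp (g i) / B)) :=
        sum_le_sum fun i _ => termwise i
    _ = A ^ p * B ^ q * (p * (A / A) + q * (B / B)) := by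
        rw [← mul_sum, sum_add_distrib, ← mul_sum, ← mul_sum, ← sum_div, ← sum_div]
    _ = A ^ p * B ^ q := by rw [div_self hA.ne', div_self hB.ne', mul_one, mul_one, hpq, mul_one]

theorem convexOn_logSumExp : ConvexOn ℝ Set.univ (logSumExp : (ι → ℝ) → ℝ) := by
  refine ⟨convex_univ, fun f _ g _ p q hp hq hpq => ?_⟩
  calc logSumExp (p • f + q • g) = log (∑ i, exp (p * f i + q * g i)) := rfl
    _ ≤ log ((∑ i, exp (f i)) ^ p * (∑ i, exp (g i)) ^ q) :=
        log_le_log (sum_exp_pos _) (sum_exp_mul_add_mul_le f g hp hq hpq)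
    _ = p • logSumExp f + q • logSumExp g := by
        rw [log_mul (rpow_pos_of_pos (sum_exp_pos f) p).ne' (rpow_pos_of_pos (sum_exp_pos g) q).ne',
          log_rpow (sum_exp_pos f), log_rpow (sum_exp_pos g)]
        rfl

theorem isSubmodular_logSumExp : IsSubmodular (logSumExp : (ι → ℝ) → ℝ) := by
  intro f g
  have hexp_sup : ∀ i, exp ((f ⊔ g) i) = (exp ∘ f ⊔ exp ∘ g) i :=
    fun i => exp_monotone.map_sup (f i) (g i)
  have hexp_inf : ∀ i, exp ((f ⊓ g) i) = (exp ∘ f ⊓ exp ∘ g) i :=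
    fun i => exp_monotone.map_inf (f i) (g i)
  simp only [logSumExp]
  rw [← log_mul (sum_exp_pos _).ne' (sum_exp_pos _).ne',
    ← log_mul (sum_exp_pos _).ne' (sum_exp_pos _).ne']
  refine log_le_log (mul_pos (sum_exp_pos _) (sum_exp_pos _)) ?_
  simpa only [hexp_sup, hexp_inf, Function.comp_apply] using
    sum_sup_mul_sum_inf_le univ (exp ∘ f) (exp ∘ g)

end LogSumExp

section OutsideOption

variable {Y : Type*}

def extendByZero : (Y → ℝ) →ₗ[ℝ] Option Y → ℝ where
  toFun a o := o.elim 0 a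
  map_add' a b := by ext o; cases o <;> simp
  map_smul' c a := by ext o; cases o <;> simp

theorem log_one_add_sum_exp_eq_logSumExp [Fintype Y] (a : Y → ℝ) :
    log (1 + ∑ y, exp (a y)) = logSumExp (extendByZero a) := by
  simp [logSumExp, extendByZero, Fintype.sum_option]

theorem extendByZero_sup (a b : Y → ℝ) :
    extendByZero (a ⊔ b) = extendByZero a ⊔ extendByZero b := by
  ext o; cases o <;> simp [extendByZero]

theorem extendByZero_inf (a b : Y → ℝ) :
    extendByZero (a ⊓ b) = extendByZero a ⊓ extendByZero b := by
  ext o; cases o <;> simp [extendByZero]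

theorem convexOn_log_one_add_sum_exp [Fintype Y] :
    ConvexOn ℝ Set.univ fun a : Y → ℝ => log (1 + ∑ y, exp (a y)) := by
  simp_rw [log_one_add_sum_exp_eq_logSumExp]
  have h := convexOn_logSumExp.comp_linearMap (extendByZero (Y := Y))
  rw [Set.preimage_univ] at h
  exact h

theorem isSubmodular_log_one_add_sum_exp [Fintype Y] :
    IsSubmodular fun a : Y → ℝ => log (1 + ∑ y, exp (a y)) := by
  intro a b
  simp only [log_one_add_sum_exp_eq_logSumExp, extendByZero_sup, extendByZero_inf]
  exact isSubmodular_logSumExp _ _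

end OutsideOption

section Curry

variable {X Y : Type*} [Fintype X] {F : (Y → ℝ) → ℝ} {n : X → ℝ}

theorem ConvexOn.sum_mul_curry (hF : ConvexOn ℝ Set.univ F) (hn : ∀ x, 0 ≤ n x) :
    ConvexOn ℝ Set.univ fun α : X × Y → ℝ => ∑ x, n x * F (Function.curry α x) := by
  refine ⟨convex_univ, fun α _ β _ p q hp hq hpq => ?_⟩
  simp only [smul_eq_mul, mul_sum, ← sum_add_distrib]
  gcongr with x
  calc n x * F (Function.curry (p • α + q • β) x)
      = n x * F (p • Function.curry α x + q • Function.curry β x) := rfl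
    _ ≤ n x * (p * F (Function.curry α x) + q * F (Function.curry β x)) :=
        mul_le_mul_of_nonneg_left (hF.2 trivial trivial hp hq hpq) (hn x)
    _ = p * (n x * F (Function.curry α x)) + q * (n x * F (Function.curry β x)) := by ring

theorem IsSubmodular.sum_mul_curry (hF : IsSubmodular F) (hn : ∀ x, 0 ≤ n x) :
    IsSubmodular fun α : X × Y → ℝ => ∑ x, n x * F (Function.curry α x) := by
  intro α β
  simp only [← sum_add_distrib, ← mul_add]
  exact sum_le_sum fun x _ => mul_le_mul_of_nonneg_left (hF _ _) (hn x)

end Curry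

/-- The logit welfare function `G(α) = Σ_x n_x log(1 + Σ_y exp α_{xy})` is convex
and submodular. -/
theorem logit_welfare_convex_submodular {X Y : Type*} [Fintype X] [Fintype Y]
    (n : X → ℝ) (hn : ∀ x, 0 < n x)
    (G : (X × Y → ℝ) → ℝ)
    (hG : ∀ α, G α = ∑ x : X, n x * Real.log (1 + ∑ y : Y, Real.exp (α (x, y)))) :
    ConvexOn ℝ Set.univ G ∧
      ∀ α α' : X × Y → ℝ, G (α ⊔ α') + G (α ⊓ α') ≤ G α + G α' := by
  obtain rfl : G = fun α => ∑ x, n x * log (1 + ∑ y, exp (Function.curry α x y)) := funext hG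
  have hn₀ : ∀ x, 0 ≤ n x := fun x => (hn x).le
  exact ⟨convexOn_log_one_add_sum_exp.sum_mul_curry hn₀,
    isSubmodular_log_one_add_sum_exp.sum_mul_curry hn₀⟩
end

section
/- Let G, H : R^{X×Y} → R be convex functions whose conjugates G*, H* have compact domains contained in [0,n] and [0,m] respectively with 0 ∈ dom G* ∩ dom H*. Define the aggregated deferred acceptance iteration: μ^{A,k+1} = μ^{A,k} − (μ^{P,k} − μ^{T,k}) with μ^{P,k} ∈ argmax_{μ^{T,k−1} ≤ μ ≤ μ^{A,k}} ⟨μ,α⟩ − G*(μ) and μ^{T,k} ∈ argmax_{0 ≤ μ ≤ μ^{P,k}} ⟨μ,γ⟩ − H*(μ), initialized with μ^{A,0} = min(n,m) and μ^{T,−1}=0. Assume G submodular. Then the sequence (μ^{A,k}) is componentwise nonincreasing and bounded below by 0, hence converges. -/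
noncomputable section
open Filter

/-- Legendre–Fenchel conjugate (valued in `EReal`) of a real-valued function. -/
def conjR {ι : Type*} [Fintype ι] (G : (ι → ℝ) → ℝ) (μ : ι → ℝ) : EReal :=
  ⨆ p : ι → ℝ, ((∑ i, p i * μ i : ℝ) : EReal) - (G p : EReal)

/-- Convergence of the aggregated deferred acceptance iteration: the sequence of
available masses is nonincreasing, bounded below by `0`, hence converges. -/
theorem ada_monotone_converges {X Y : Type*} [Fintype X] [Fintype Y]
    (G H : ((X × Y) → ℝ) → ℝ)
    (hGconv : ConvexOn ℝ Set.univ G) (hHconv : ConvexOn ℝ Set.univ H)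
    (n m : (X × Y) → ℝ)
    (hGc : IsCompact {μ : (X × Y) → ℝ | conjR G μ ≠ ⊤})
    (hGdom : {μ : (X × Y) → ℝ | conjR G μ ≠ ⊤} ⊆ Set.Icc 0 n)
    (hG0 : conjR G (0 : (X × Y) → ℝ) ≠ ⊤)
    (hHc : IsCompact {μ : (X × Y) → ℝ | conjR H μ ≠ ⊤})
    (hHdom : {μ : (X × Y) → ℝ | conjR H μ ≠ ⊤} ⊆ Set.Icc 0 m)
    (hH0 : conjR H (0 : (X × Y) → ℝ) ≠ ⊤)
    (hGsub : ∀ a b : (X × Y) → ℝ, G (a ⊔ b) + G (a ⊓ b) ≤ G a + G b)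
    (α γ : (X × Y) → ℝ)
    (μA μP μT : ℕ → ((X × Y) → ℝ))
    (hA0 : μA 0 = n ⊓ m)
    (hP : ∀ k : ℕ,
      (if k = 0 then (0 : (X × Y) → ℝ) else μT (k - 1)) ≤ μP k ∧ μP k ≤ μA k ∧
        ∀ ν : (X × Y) → ℝ,
          (if k = 0 then (0 : (X × Y) → ℝ) else μT (k - 1)) ≤ ν → ν ≤ μA k →
          ((∑ i, ν i * α i : ℝ) : EReal) - conjR G ν ≤
            ((∑ i, μP k i * α i : ℝ) : EReal) - conjR G (μP k))
    (hT : ∀ k : ℕ, 0 ≤ μT k ∧ μT k ≤ μP k ∧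
        ∀ ν : (X × Y) → ℝ, 0 ≤ ν → ν ≤ μP k →
          ((∑ i, ν i * γ i : ℝ) : EReal) - conjR H ν ≤
            ((∑ i, μT k i * γ i : ℝ) : EReal) - conjR H (μT k))
    (hUpd : ∀ k : ℕ, μA (k + 1) = μA k - (μP k - μT k)) :
    (∀ k, μA (k + 1) ≤ μA k) ∧ (∀ k, 0 ≤ μA k) ∧
      ∃ L : (X × Y) → ℝ, Tendsto μA atTop (nhds L) := by
  have hn : (0 : (X × Y) → ℝ) ≤ n := (hGdom hG0).2
  have hm : (0 : (X × Y) → ℝ) ≤ m := (hHdom hH0).2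
  have hmono : ∀ k, μA (k + 1) ≤ μA k := by
    intro k
    rw [hUpd k]
    exact sub_le_self _ (sub_nonneg.mpr (hT k).2.1)
  have hnonneg : ∀ k, 0 ≤ μA k := by
    intro k
    induction k with
    | zero => rw [hA0]; exact le_inf hn hm
    | succ k ih =>
      rw [hUpd k]
      have h1 : 0 ≤ μA k - μP k := sub_nonneg.mpr (hP k).2.1
      have h2 : 0 ≤ μT k := (hT k).1
      have : μA k - (μP k - μT k) = (μA k - μP k) + μT k := by abel
      rw [this]
      exact add_nonneg h1 h2
  refine ⟨hmono, hnonneg, ?_⟩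
  have hanti : ∀ i, Antitone (fun k => μA k i) :=
    fun i => antitone_nat_of_succ_le (fun k => hmono k i)
  have hbdd : ∀ i, BddBelow (Set.range fun k => μA k i) :=
    fun i => ⟨0, by rintro x ⟨k, rfl⟩; exact hnonneg k i⟩
  refine ⟨fun i => ⨅ k, μA k i, ?_⟩
  rw [tendsto_pi_nhds]
  intro i
  exact tendsto_atTop_ciInf (hanti i) (hbdd i)
end
end
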